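/- arXiv:2109.06911 — 2 statements merged into one kernel-verified Lean document; each statement's English description precedes it below -/
import Mathlib

section
/- (DRO interpretation of SVP.) For every x ∈ 𝒳, P ∈ 𝒫°, and T ∈ ℕ large enough that √(2a_T/T) ≤ (min_{i∈Σ} P(i)) · (min_{i∈Σ} min(P(i), 1−P(i))), the SVP predictor admits the distributionally robust representation ĉ_V(x,P,T) = sup{ c(x,P') : P' ∈ 𝒫, ‖P'−P‖_P² ≤ a_T/T }. Moreover, if Var_P(ℓ(x,ξ)) > 0, the supremum is attained: ĉ_V(x,P,T) = c(x, P + √(2a_T/T)·φ_x(P)), where φ_x(P) ∈ ℝ^d has entries φ_x(P)_i := (ℓ(x,i)·P(i) − c(x,P)·P(i)) / √(Var_P(ℓ(x,ξ))), and φ_x(P) satisfies ‖√2·φ_x(P)‖_P = 1 and c(x,φ_x(P)) = √(Var_P(ℓ(x,ξ))). -/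
open Filter Asymptotics

namespace DDO

/-- The probability simplex `𝒫` over the scenario set `Σ = Fin d`. -/
def simplex (d : ℕ) : Set (Fin d → ℝ) :=
  {P | (∀ i, 0 ≤ P i) ∧ ∑ i, P i = 1}

/-- The relative interior `𝒫°` of the probability simplex. -/
def simplexInt (d : ℕ) : Set (Fin d → ℝ) :=
  {P | (∀ i, 0 < P i) ∧ ∑ i, P i = 1}

/-- Expected cost `c(x, P) = ∑ i, ℓ(x, i) · P(i)` (extended linearly to `ℝ^d`). -/
noncomputable def cost {X : Type*} {d : ℕ} (ℓ : X → Fin d → ℝ) (x : X)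
    (P : Fin d → ℝ) : ℝ :=
  ∑ i, ℓ x i * P i

/-- Variance `Var_P(ℓ(x, ξ))` of the loss under `P`. -/
noncomputable def varLoss {X : Type*} {d : ℕ} (ℓ : X → Fin d → ℝ) (x : X)
    (P : Fin d → ℝ) : ℝ :=
  (∑ i, ℓ x i ^ 2 * P i) - cost ℓ x P ^ 2

/-- Empirical distribution `P̂_T` of the `T` samples `ω`. -/
noncomputable def empDist {d T : ℕ} (ω : Fin T → Fin d) : Fin d → ℝ :=
  fun i => ((Finset.univ.filter (fun t => ω t = i)).card : ℝ) / (T : ℝ)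

open Classical in
/-- `ℙ^∞(A)`: the probability, under i.i.d. sampling from `P`, of an event `A`
depending on the first `T` samples. -/
noncomputable def probT {d : ℕ} (P : Fin d → ℝ) (T : ℕ)
    (A : (Fin T → Fin d) → Prop) : ℝ :=
  ∑ ω : Fin T → Fin d, if A ω then ∏ t, P (ω t) else 0

/-- Regular predictors (the class `𝒞`): uniformly bounded, equicontinuous,
differentiable in the distribution argument (in the Fréchet sense along the simplex),
with uniformly bounded and equicontinuous derivatives. -/
structure IsRegularPredictor {X : Type*} [MetricSpace X] (d : ℕ)
    (chat : X → (Fin d → ℝ) → ℕ → ℝ) : Prop where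
  unifBounded : ∃ K : ℝ, ∀ (T : ℕ) (x : X), ∀ P ∈ simplex d, |chat x P T| ≤ K
  equicontinuous : ∀ (x : X), ∀ P ∈ simplex d, ∀ ε > (0 : ℝ), ∃ δ > (0 : ℝ),
    ∀ (T : ℕ) (x' : X), ∀ P' ∈ simplex d,
      dist x x' < δ → dist P P' < δ → |chat x P T - chat x' P' T| < ε
  differentiableDeriv : ∃ D : X → (Fin d → ℝ) → ℕ → ((Fin d → ℝ) →L[ℝ] ℝ),
    (∀ (T : ℕ) (x : X), ∀ P ∈ simplex d,
      HasFDerivWithinAt (fun Q => chat x Q T) (D x P T) (simplex d) P) ∧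
    (∃ K : ℝ, ∀ (T : ℕ) (x : X), ∀ P ∈ simplex d, ‖D x P T‖ ≤ K) ∧
    (∀ (x : X), ∀ P ∈ simplex d, ∀ ε > (0 : ℝ), ∃ δ > (0 : ℝ),
      ∀ (T : ℕ) (x' : X), ∀ P' ∈ simplex d,
        dist x x' < δ → dist P P' < δ → ‖D x P T - D x' P' T‖ < ε)

/-- The out-of-sample guarantee at speed `(a_T)`:
`limsup_{T→∞} (1/a_T) · log ℙ^∞( c(x,P) > ĉ(x, P̂_T, T) ) ≤ -1`
for every `x ∈ 𝒳` and `P ∈ 𝒫°`, stated in the equivalent ε-eventual form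
`ℙ^∞(disappointment) ≤ exp((-1+ε) a_T)` eventually (which in particular permits a
disappointment probability equal to zero). -/
def OOSGuarantee {X : Type*} {d : ℕ} (ℓ : X → Fin d → ℝ) (a : ℕ → ℝ)
    (chat : X → (Fin d → ℝ) → ℕ → ℝ) : Prop :=
  ∀ (x : X), ∀ P ∈ simplexInt d, ∀ ε > (0 : ℝ), ∀ᶠ T : ℕ in atTop,
    probT P T (fun ω => cost ℓ x P > chat x (empDist ω) T) ≤
      Real.exp ((-1 + ε) * a T)

/-- The prediction error `|ĉ(x,P,T) - c(x,P)|`. -/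
noncomputable def predErr {X : Type*} {d : ℕ} (ℓ : X → Fin d → ℝ)
    (chat : X → (Fin d → ℝ) → ℕ → ℝ) (x : X) (P : Fin d → ℝ) (T : ℕ) : ℝ :=
  |chat x P T - cost ℓ x P|

open Classical in
/-- Ratio with the convention `0 / 0 = 1`. -/
noncomputable def ratio (u v : ℝ) : ℝ := if u = 0 ∧ v = 0 then 1 else u / v

/-- The partial order `⪯_𝒞` on predictors:
`limsup_{T→∞} |ĉ₁(x,P,T) - c(x,P)| / |ĉ₂(x,P,T) - c(x,P)| ≤ 1`
(convention `0/0 = 1`) for every `x ∈ 𝒳`, `P ∈ 𝒫°`, stated in the equivalent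
ε-eventual form (the ratio is a nonnegative sequence). -/
def PredOrder {X : Type*} {d : ℕ} (ℓ : X → Fin d → ℝ)
    (chat1 chat2 : X → (Fin d → ℝ) → ℕ → ℝ) : Prop :=
  ∀ (x : X), ∀ P ∈ simplexInt d, ∀ ε > (0 : ℝ), ∀ᶠ T : ℕ in atTop,
    ratio (predErr ℓ chat1 x P T) (predErr ℓ chat2 x P T) ≤ 1 + ε

/-- The equivalence `≡` on predictors: `|ĉ₁ - c|` and `|ĉ₂ - c|` are asymptotically
equivalent as `T → ∞` for every `x ∈ 𝒳` and `P ∈ 𝒫°`. -/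
def PredEquiv {X : Type*} {d : ℕ} (ℓ : X → Fin d → ℝ)
    (chat1 chat2 : X → (Fin d → ℝ) → ℕ → ℝ) : Prop :=
  ∀ (x : X), ∀ P ∈ simplexInt d,
    (fun T : ℕ => predErr ℓ chat1 x P T) ~[atTop]
      (fun T : ℕ => predErr ℓ chat2 x P T)

/-- A single term `q · log(q/p)` of the relative entropy, with the conventions
`0 · log(0/p) = 0` and `q · log(q/0) = ∞` for `q > 0`. -/
noncomputable def klTerm (q p : ℝ) : EReal :=
  if q = 0 then 0 else if p = 0 then ⊤ else ((q * Real.log (q / p) : ℝ) : EReal)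

/-- The relative entropy (KL divergence) `I(Q, P')`. -/
noncomputable def relEnt {d : ℕ} (Q P' : Fin d → ℝ) : EReal :=
  ∑ i, klTerm (Q i) (P' i)

/-- The KL-DRO predictor with radius `r`:
`ĉ_KL(x,P) = sup { c(x,P') : P' ∈ 𝒫, I(P,P') ≤ r }`. -/
noncomputable def cKL {X : Type*} {d : ℕ} (ℓ : X → Fin d → ℝ) (r : ℝ)
    (x : X) (P : Fin d → ℝ) : ℝ :=
  sSup {y | ∃ P' ∈ simplex d, relEnt P P' ≤ (r : EReal) ∧ y = cost ℓ x P'}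

/-- The robust predictor `ĉ_R(x) = max_{i ∈ Σ} ℓ(x,i)`. -/
noncomputable def cR {X : Type*} {d : ℕ} (ℓ : X → Fin d → ℝ) (x : X) : ℝ :=
  ⨆ i : Fin d, ℓ x i

/-- The sample variance penalization (SVP) predictor
`ĉ_V(x,P,T) = c(x,P) + √((2 a_T / T) · Var_P(ℓ(x,ξ)))`. -/
noncomputable def cV {X : Type*} {d : ℕ} (a : ℕ → ℝ) (ℓ : X → Fin d → ℝ)
    (x : X) (P : Fin d → ℝ) (T : ℕ) : ℝ :=
  cost ℓ x P + Real.sqrt ((2 * a T / (T : ℝ)) * varLoss ℓ x P)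

/-- The squared local ellipsoid norm `‖Δ‖_P² = (1/2) ∑ i, Δ_i² / P(i)`. -/
noncomputable def ellNormSq {d : ℕ} (P Δ : Fin d → ℝ) : ℝ :=
  (1 / 2) * ∑ i, Δ i ^ 2 / P i

/-- The optimal cost `c*(P) = min_{x ∈ 𝒳} c(x,P)`. -/
noncomputable def cstar {X : Type*} {d : ℕ} (ℓ : X → Fin d → ℝ)
    (P : Fin d → ℝ) : ℝ :=
  sInf (Set.range fun x : X => cost ℓ x P)

/-- The optimal predicted cost `ĉ*(P,T) = min_{x ∈ 𝒳} ĉ(x,P,T)`. -/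
noncomputable def chatStar {X : Type*} {d : ℕ} (chat : X → (Fin d → ℝ) → ℕ → ℝ)
    (P : Fin d → ℝ) (T : ℕ) : ℝ :=
  sInf (Set.range fun x : X => chat x P T)

/-- `x̂` is a prescriptor associated with the predictor `ĉ`:
`x̂_T(P) ∈ argmin_{x ∈ 𝒳} ĉ(x,P,T)` for all `P ∈ 𝒫` and `T`. -/
def IsPrescriptor {X : Type*} {d : ℕ} (chat : X → (Fin d → ℝ) → ℕ → ℝ)
    (xhat : ℕ → (Fin d → ℝ) → X) : Prop :=
  ∀ (T : ℕ), ∀ P ∈ simplex d, ∀ x : X, chat (xhat T P) P T ≤ chat x P T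

/-- The prescription out-of-sample guarantee at speed `(a_T)`:
`limsup_{T→∞} (1/a_T) · log ℙ^∞( c(x̂_T(P̂_T), P) > ĉ*(P̂_T, T) ) ≤ -1`
for every `P ∈ 𝒫°`, stated in the equivalent ε-eventual form. -/
def PrescOOSGuarantee {X : Type*} {d : ℕ} (ℓ : X → Fin d → ℝ) (a : ℕ → ℝ)
    (chat : X → (Fin d → ℝ) → ℕ → ℝ) (xhat : ℕ → (Fin d → ℝ) → X) : Prop :=
  ∀ P ∈ simplexInt d, ∀ ε > (0 : ℝ), ∀ᶠ T : ℕ in atTop,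
    probT P T (fun ω =>
        cost ℓ (xhat T (empDist ω)) P > chatStar chat (empDist ω) T) ≤
      Real.exp ((-1 + ε) * a T)

/-- The partial order `⪯_X̂` on prescriptors:
`limsup_{T→∞} |ĉ₁*(P,T) - c*(P)| / |ĉ₂*(P,T) - c*(P)| ≤ 1` (convention `0/0 = 1`)
for every `P ∈ 𝒫°`, stated in the equivalent ε-eventual form. -/
def PrescOrder {X : Type*} {d : ℕ} (ℓ : X → Fin d → ℝ)
    (chat1 chat2 : X → (Fin d → ℝ) → ℕ → ℝ) : Prop :=
  ∀ P ∈ simplexInt d, ∀ ε > (0 : ℝ), ∀ᶠ T : ℕ in atTop,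
    ratio |chatStar chat1 P T - cstar ℓ P| |chatStar chat2 P T - cstar ℓ P| ≤ 1 + ε

/-- The equivalence `≡_X̂` on prescriptors: `|ĉ₁* - c*|` and `|ĉ₂* - c*|` are
asymptotically equivalent as `T → ∞` for every `P ∈ 𝒫°`. -/
def PrescEquiv {X : Type*} {d : ℕ} (ℓ : X → Fin d → ℝ)
    (chat1 chat2 : X → (Fin d → ℝ) → ℕ → ℝ) : Prop :=
  ∀ P ∈ simplexInt d,
    (fun T : ℕ => |chatStar chat1 P T - cstar ℓ P|) ~[atTop]
      (fun T : ℕ => |chatStar chat2 P T - cstar ℓ P|)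
/-! Write `P' = P + Δ` with `∑ Δ = 0`. Then `c(x,P') - c(x,P) = ∑ (ℓ(x,i) - c(x,P)) Δ_i`, and the
weighted Cauchy–Schwarz inequality bounds its square by `2 Var_P · ‖Δ‖_P²`, so every `P'` in the
ellipsoid of radius `r` has cost at most `c(x,P) + √(2 r Var_P)`. Cauchy–Schwarz is an equality for
`Δ` proportional to `((ℓ(x,i) - c(x,P)) P(i))_i`, i.e. along `φ_x(P)`, and the smallness of `r`
keeps `P + √(2r) φ_x(P)` nonnegative because `2r (ℓ(x,i) - c(x,P))² ≤ P(i) (ℓ(x,i) - c(x,P))² ≤ Var_P`.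
When the variance vanishes, `φ_x(P) = 0` (division by `√0 = 0`) and the maximizer is `P` itself. -/

theorem simplexInt_subset_simplex (d : ℕ) : simplexInt d ⊆ simplex d :=
  fun _ hP => ⟨fun i => (hP.1 i).le, hP.2⟩

theorem apply_le_one_of_mem_simplex {d : ℕ} {P : Fin d → ℝ} (hP : P ∈ simplex d) (i : Fin d) :
    P i ≤ 1 :=
  hP.2 ▸ Finset.single_le_sum (fun j _ => hP.1 j) (Finset.mem_univ i)

theorem ellNormSq_const_mul {d : ℕ} (P Δ : Fin d → ℝ) (t : ℝ) :
    ellNormSq P (fun i => t * Δ i) = t ^ 2 * ellNormSq P Δ := by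
  simp only [ellNormSq, mul_pow, mul_div_assoc, ← Finset.mul_sum]
  ring

section Cost

variable {X : Type*} {d : ℕ} (ℓ : X → Fin d → ℝ) (x : X)

theorem cost_sub (P Q : Fin d → ℝ) : cost ℓ x (P - Q) = cost ℓ x P - cost ℓ x Q := by
  simp only [cost, Pi.sub_apply, mul_sub, Finset.sum_sub_distrib]

theorem cost_add_const_mul (P Δ : Fin d → ℝ) (t : ℝ) :
    cost ℓ x (fun i => P i + t * Δ i) = cost ℓ x P + t * cost ℓ x Δ := by
  simp only [cost, mul_add, Finset.sum_add_distrib, Finset.mul_sum]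
  congr 1
  exact Finset.sum_congr rfl fun i _ => by ring

theorem cost_eq_sum_sub_mul {Δ : Fin d → ℝ} (hΔ : ∑ i, Δ i = 0) (c : ℝ) :
    cost ℓ x Δ = ∑ i, (ℓ x i - c) * Δ i := by
  simp only [cost, sub_mul, Finset.sum_sub_distrib, ← Finset.mul_sum, hΔ, mul_zero, sub_zero]

theorem varLoss_eq_sum_sq {P : Fin d → ℝ} (hP : ∑ i, P i = 1) :
    varLoss ℓ x P = ∑ i, (ℓ x i - cost ℓ x P) ^ 2 * P i := by
  have expand : ∀ i, (ℓ x i - cost ℓ x P) ^ 2 * P i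
      = ℓ x i ^ 2 * P i - 2 * cost ℓ x P * (ℓ x i * P i) + cost ℓ x P ^ 2 * P i :=
    fun i => by ring
  simp only [expand, Finset.sum_add_distrib, Finset.sum_sub_distrib, ← Finset.mul_sum, hP]
  rw [varLoss, cost]
  ring

theorem sq_sub_cost_mul_le_varLoss {P : Fin d → ℝ} (hP : P ∈ simplex d) (i : Fin d) :
    (ℓ x i - cost ℓ x P) ^ 2 * P i ≤ varLoss ℓ x P := by
  rw [varLoss_eq_sum_sq ℓ x hP.2]
  exact Finset.single_le_sum (f := fun j => (ℓ x j - cost ℓ x P) ^ 2 * P j)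
    (fun j _ => mul_nonneg (sq_nonneg _) (hP.1 j)) (Finset.mem_univ i)

theorem varLoss_nonneg {P : Fin d → ℝ} (hP : P ∈ simplex d) : 0 ≤ varLoss ℓ x P := by
  rw [varLoss_eq_sum_sq ℓ x hP.2]
  exact Finset.sum_nonneg fun i _ => mul_nonneg (sq_nonneg _) (hP.1 i)

theorem sq_cost_le_two_mul_varLoss_mul_ellNormSq {P Δ : Fin d → ℝ} (hP : P ∈ simplexInt d)
    (hΔ : ∑ i, Δ i = 0) : cost ℓ x Δ ^ 2 ≤ 2 * varLoss ℓ x P * ellNormSq P Δ := by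
  have cauchySchwarz := Finset.sum_sq_le_sum_mul_sum_of_sq_le_mul Finset.univ
    (r := fun i => (ℓ x i - cost ℓ x P) * Δ i) (f := fun i => (ℓ x i - cost ℓ x P) ^ 2 * P i)
    (g := fun i => Δ i ^ 2 / P i)
    (fun i _ => mul_nonneg (sq_nonneg _) (hP.1 i).le)
    (fun i _ => div_nonneg (sq_nonneg (Δ i)) (hP.1 i).le)
    (fun i _ => le_of_eq (by field_simp [(hP.1 i).ne']))
  rw [cost_eq_sum_sub_mul ℓ x hΔ (cost ℓ x P), varLoss_eq_sum_sq ℓ x hP.2, ellNormSq]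
  linarith

theorem cost_le_of_ellNormSq_sub_le {P P' : Fin d → ℝ} {r : ℝ} (hP : P ∈ simplexInt d)
    (hP' : ∑ i, P' i = 1) (hr : ellNormSq P (P' - P) ≤ r) :
    cost ℓ x P' ≤ cost ℓ x P + √(2 * r * varLoss ℓ x P) := by
  have hΔ : ∑ i, (P' - P) i = 0 := by
    simp only [Pi.sub_apply, Finset.sum_sub_distrib, hP', hP.2, sub_self]
  have hV := varLoss_nonneg ℓ x (simplexInt_subset_simplex d hP)
  calc cost ℓ x P' = cost ℓ x P + cost ℓ x (P' - P) := by rw [cost_sub]; ring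
    _ ≤ cost ℓ x P + √(cost ℓ x (P' - P) ^ 2) := by
        rw [Real.sqrt_sq_eq_abs]; gcongr; exact le_abs_self _
    _ ≤ cost ℓ x P + √(2 * r * varLoss ℓ x P) := by
        gcongr
        calc cost ℓ x (P' - P) ^ 2 ≤ 2 * varLoss ℓ x P * ellNormSq P (P' - P) :=
              sq_cost_le_two_mul_varLoss_mul_ellNormSq ℓ x hP hΔ
          _ ≤ 2 * varLoss ℓ x P * r := by gcongr
          _ = 2 * r * varLoss ℓ x P := by ring

/-- The paper's `φ_x(P)`. -/
noncomputable def svpDirection (P : Fin d → ℝ) : Fin d → ℝ :=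
  fun i => (ℓ x i * P i - cost ℓ x P * P i) / √(varLoss ℓ x P)

theorem sum_svpDirection {P : Fin d → ℝ} (hP : ∑ i, P i = 1) : ∑ i, svpDirection ℓ x P i = 0 := by
  simp only [svpDirection, ← Finset.sum_div, Finset.sum_sub_distrib, ← Finset.mul_sum, hP]
  rw [cost]
  ring

theorem cost_svpDirection (P : Fin d → ℝ) :
    cost ℓ x (svpDirection ℓ x P) = √(varLoss ℓ x P) := by
  have hnum : ∑ i, ℓ x i * (ℓ x i * P i - cost ℓ x P * P i) = varLoss ℓ x P := by
    have expand : ∀ i, ℓ x i * (ℓ x i * P i - cost ℓ x P * P i)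
        = ℓ x i ^ 2 * P i - cost ℓ x P * (ℓ x i * P i) := fun i => by ring
    simp only [expand, Finset.sum_sub_distrib, ← Finset.mul_sum]
    rw [varLoss, ← cost]
    ring
  change ∑ i, ℓ x i * svpDirection ℓ x P i = _
  simp only [svpDirection, mul_div_assoc', ← Finset.sum_div]
  rw [hnum, Real.div_sqrt]

theorem ellNormSq_svpDirection {P : Fin d → ℝ} (hP : P ∈ simplexInt d) :
    ellNormSq P (svpDirection ℓ x P) = varLoss ℓ x P / varLoss ℓ x P / 2 := by
  have hV := varLoss_nonneg ℓ x (simplexInt_subset_simplex d hP)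
  have term : ∀ i, svpDirection ℓ x P i ^ 2 / P i
      = (ℓ x i - cost ℓ x P) ^ 2 * P i / varLoss ℓ x P := fun i => by
    rw [svpDirection, div_pow, Real.sq_sqrt hV]
    field_simp [(hP.1 i).ne']
  rw [ellNormSq, Finset.sum_congr rfl fun i _ => term i, ← Finset.sum_div,
    ← varLoss_eq_sum_sq ℓ x hP.2]
  ring

theorem ellNormSq_const_mul_svpDirection_le {P : Fin d → ℝ} (hP : P ∈ simplexInt d) (t : ℝ) :
    ellNormSq P (fun i => t * svpDirection ℓ x P i) ≤ t ^ 2 / 2 := by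
  rw [ellNormSq_const_mul, ellNormSq_svpDirection ℓ x hP]
  have := div_self_le_one (varLoss ℓ x P)
  have := sq_nonneg t
  nlinarith

theorem mul_abs_svpDirection_le {P : Fin d → ℝ} (hP : P ∈ simplex d) {t : ℝ} (ht : 0 ≤ t)
    {i : Fin d} (hti : t ^ 2 ≤ P i) : t * |svpDirection ℓ x P i| ≤ P i := by
  have hdev : t * |ℓ x i - cost ℓ x P| ≤ √(varLoss ℓ x P) := by
    rw [← Real.sqrt_sq ht, ← Real.sqrt_sq_eq_abs, ← Real.sqrt_mul (sq_nonneg t)]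
    refine Real.sqrt_le_sqrt ((?_ : _ ≤ _).trans (sq_sub_cost_mul_le_varLoss ℓ x hP i))
    rw [mul_comm]
    exact mul_le_mul_of_nonneg_left hti (sq_nonneg _)
  rw [svpDirection, ← sub_mul, abs_div, abs_mul, abs_of_nonneg (hP.1 i),
    abs_of_nonneg (Real.sqrt_nonneg _), mul_div_assoc', ← mul_assoc]
  exact div_le_of_le_mul₀ (Real.sqrt_nonneg _) (hP.1 i) (by
    rw [mul_comm (P i)]; exact mul_le_mul_of_nonneg_right hdev (hP.1 i))

theorem add_const_mul_svpDirection_mem_simplex {P : Fin d → ℝ} (hP : P ∈ simplex d) {t : ℝ}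
    (ht : 0 ≤ t) (hsmall : ∀ i, t ^ 2 ≤ P i) :
    (fun i => P i + t * svpDirection ℓ x P i) ∈ simplex d := by
  refine ⟨fun i => ?_, ?_⟩
  · have := mul_abs_svpDirection_le ℓ x hP ht (hsmall i)
    rw [← abs_of_nonneg ht, ← abs_mul] at this
    linarith [neg_abs_le (t * svpDirection ℓ x P i)]
  · rw [Finset.sum_add_distrib, ← Finset.mul_sum, sum_svpDirection ℓ x hP.2, hP.2]
    ring

theorem isGreatest_cost_ellipsoid {P : Fin d → ℝ} (hP : P ∈ simplexInt d) {r : ℝ} (hr : 0 ≤ r)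
    (hsmall : ∀ i, 2 * r ≤ P i) :
    IsGreatest {y | ∃ P' ∈ simplex d, ellNormSq P (P' - P) ≤ r ∧ y = cost ℓ x P'}
      (cost ℓ x P + √(2 * r * varLoss ℓ x P)) := by
  have ht : √(2 * r) ^ 2 = 2 * r := Real.sq_sqrt (by positivity)
  refine ⟨⟨fun i => P i + √(2 * r) * svpDirection ℓ x P i,
    add_const_mul_svpDirection_mem_simplex ℓ x (simplexInt_subset_simplex d hP)
      (Real.sqrt_nonneg _) (fun i => ht.trans_le (hsmall i)), ?_, ?_⟩, ?_⟩
  · have hsub : (fun i => P i + √(2 * r) * svpDirection ℓ x P i) - P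
        = fun i => √(2 * r) * svpDirection ℓ x P i := by
      ext i; simp
    linarith [hsub ▸ ellNormSq_const_mul_svpDirection_le ℓ x hP √(2 * r)]
  · rw [cost_add_const_mul, cost_svpDirection, Real.sqrt_mul (by positivity)]
  · rintro y ⟨P', hP', hr', rfl⟩
    exact cost_le_of_ellNormSq_sub_le ℓ x hP hP'.2 hr'

end Cost

theorem stmt_4_general {X : Type*} {d : ℕ}
    (ℓ : X → Fin d → ℝ)
    (a : ℕ → ℝ) (ha_pos : ∀ T, 0 < a T)
    (x : X) (P : Fin d → ℝ) (hP : P ∈ simplexInt d)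
    (T : ℕ)
    (hTlarge : ∀ i j : Fin d,
      Real.sqrt (2 * a T / (T : ℝ)) ≤ P i * min (P j) (1 - P j)) :
    cV a ℓ x P T =
        sSup {y | ∃ P' ∈ simplex d,
          ellNormSq P (P' - P) ≤ a T / (T : ℝ) ∧ y = cost ℓ x P'} ∧
      (0 < varLoss ℓ x P →
        ∀ φ : Fin d → ℝ,
          φ = (fun i =>
              (ℓ x i * P i - cost ℓ x P * P i) / Real.sqrt (varLoss ℓ x P)) →
            (fun i => P i + Real.sqrt (2 * a T / (T : ℝ)) * φ i) ∈ simplex d ∧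
            ellNormSq P (fun i => Real.sqrt (2 * a T / (T : ℝ)) * φ i) ≤
              a T / (T : ℝ) ∧
            cV a ℓ x P T =
              cost ℓ x (fun i => P i + Real.sqrt (2 * a T / (T : ℝ)) * φ i) ∧
            Real.sqrt (ellNormSq P fun i => Real.sqrt 2 * φ i) = 1 ∧
            cost ℓ x φ = Real.sqrt (varLoss ℓ x P)) := by
  set r := a T / (T : ℝ)
  have hr : 0 ≤ r := div_nonneg (ha_pos T).le T.cast_nonneg
  have h2r : 2 * a T / (T : ℝ) = 2 * r := mul_div_assoc _ _ _
  have ht : √(2 * r) ^ 2 = 2 * r := Real.sq_sqrt (by positivity)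
  -- `2r = √(2r)² ≤ √(2r) ≤ P i ^ 2 ≤ P i`, as `√(2r) ≤ P i ^ 2 ≤ 1`
  have hsmall : ∀ i, 2 * r ≤ P i := fun i => by
    have hPi := apply_le_one_of_mem_simplex (simplexInt_subset_simplex d hP) i
    have := (h2r ▸ hTlarge i i).trans (mul_le_mul_of_nonneg_left (min_le_left _ _) (hP.1 i).le)
    nlinarith [ht, Real.sqrt_nonneg (2 * r), mul_le_mul_of_nonneg_left hPi (hP.1 i).le]
  have hcV : cV a ℓ x P T = cost ℓ x P + √(2 * r * varLoss ℓ x P) := by rw [cV, h2r]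
  refine ⟨hcV.trans (isGreatest_cost_ellipsoid ℓ x hP hr hsmall).csSup_eq.symm, fun hV φ hφ => ?_⟩
  change φ = svpDirection ℓ x P at hφ
  subst hφ
  rw [h2r, hcV, cost_add_const_mul, cost_svpDirection, ← Real.sqrt_mul (by positivity)]
  refine ⟨add_const_mul_svpDirection_mem_simplex ℓ x (simplexInt_subset_simplex d hP)
    (Real.sqrt_nonneg _) (fun i => ht.trans_le (hsmall i)), ?_, rfl, ?_, rfl⟩
  · linarith [ellNormSq_const_mul_svpDirection_le ℓ x hP √(2 * r)]
  · rw [ellNormSq_const_mul, ellNormSq_svpDirection ℓ x hP, div_self hV.ne',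
      Real.sq_sqrt zero_le_two]
    norm_num

/-- DRO interpretation of SVP: for `T` large enough, the SVP predictor equals the
DRO predictor over the local ellipsoid `‖P' - P‖_P² ≤ a_T/T`, and when the variance
is positive the supremum is attained at `P + √(2a_T/T)·φ_x(P)`, where `φ_x(P)`
satisfies `‖√2·φ_x(P)‖_P = 1` and `c(x, φ_x(P)) = √(Var_P(ℓ(x,ξ)))`. -/
theorem stmt_4 {X : Type*} [MetricSpace X] [CompactSpace X] {d : ℕ}
    (ℓ : X → Fin d → ℝ) (hℓ : ∀ i, Continuous fun x => ℓ x i)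
    (a : ℕ → ℝ) (ha_pos : ∀ T, 0 < a T)
    (x : X) (P : Fin d → ℝ) (hP : P ∈ simplexInt d)
    (T : ℕ) (hT : 0 < T)
    (hTlarge : ∀ i j : Fin d,
      Real.sqrt (2 * a T / (T : ℝ)) ≤ P i * min (P j) (1 - P j)) :
    cV a ℓ x P T =
        sSup {y | ∃ P' ∈ simplex d,
          ellNormSq P (P' - P) ≤ a T / (T : ℝ) ∧ y = cost ℓ x P'} ∧
      (0 < varLoss ℓ x P →
        ∀ φ : Fin d → ℝ,
          φ = (fun i =>
              (ℓ x i * P i - cost ℓ x P * P i) / Real.sqrt (varLoss ℓ x P)) →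
            (fun i => P i + Real.sqrt (2 * a T / (T : ℝ)) * φ i) ∈ simplex d ∧
            ellNormSq P (fun i => Real.sqrt (2 * a T / (T : ℝ)) * φ i) ≤
              a T / (T : ℝ) ∧
            cV a ℓ x P T =
              cost ℓ x (fun i => P i + Real.sqrt (2 * a T / (T : ℝ)) * φ i) ∧
            Real.sqrt (ellNormSq P fun i => Real.sqrt 2 * φ i) = 1 ∧
            cost ℓ x φ = Real.sqrt (varLoss ℓ x P)) :=
  stmt_4_general ℓ a ha_pos x P hP T hTlarge
end DDO
end

section
/- Let (a_T) be a sequence of positive reals with a_T → ∞ and a_T/T → 0 (the subexponential regime). The SVP predictor ĉ_V satisfies the out-of-sample guarantee: limsup_{T→∞} (1/a_T)·log ℙ^∞( c(x,P) > ĉ_V(x,P̂_T,T) ) ≤ −1 for every x ∈ 𝒳 and P ∈ 𝒫°. -/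
/-!
Fix `x` and `P ∈ 𝒫°`, and let `σ² = Var_P ℓ(x, ξ)`. If `σ² = 0` the loss `ℓ(x, ·)` is constant,
so `ĉ_V(x, P̂_T, T) ≥ c(x, P̂_T) = c(x, P)` and disappointment is impossible.
Otherwise, for `ρ < 1`, disappointment forces either the empirical variance below `ρ σ²`, or the
sample mean of `c(x, P) - ℓ(x, ξ_t)` above `s_T = √(2 a_T ρ σ² / T)`. The first event is a
deviation of fixed size of the sample means of `ℓ` and `ℓ²`, hence has probability `e^{-cT}`,
negligible against `e^{-a_T}` because `a_T = o(T)`. The second is a moderate deviation: Bernstein's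
inequality, whose leading constant is the exact variance, bounds it by
`exp (-κ T s_T² / (2σ²)) = exp (-κ ρ a_T)` for any `κ < 1` once `s_T` is small. Letting `κ = ρ → 1`
gives the rate `-1`.
-/

open Filter Asymptotics

namespace DDO

open Real Topology

section ProbT

variable {d T : ℕ} {P : Fin d → ℝ}

theorem probT_mono (hP : ∀ i, 0 ≤ P i) {A B : (Fin T → Fin d) → Prop}
    (h : ∀ ω, A ω → B ω) : probT P T A ≤ probT P T B := by
  refine Finset.sum_le_sum fun ω _ => ?_
  split_ifs with hA hB hB
  · exact le_rfl
  · exact absurd (h ω hA) hB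
  · exact Finset.prod_nonneg fun t _ => hP (ω t)
  · exact le_rfl

theorem probT_or_le (hP : ∀ i, 0 ≤ P i) (A B : (Fin T → Fin d) → Prop) :
    probT P T (fun ω => A ω ∨ B ω) ≤ probT P T A + probT P T B := by
  rw [probT, probT, probT, ← Finset.sum_add_distrib]
  refine Finset.sum_le_sum fun ω _ => ?_
  have : 0 ≤ ∏ t, P (ω t) := Finset.prod_nonneg fun t _ => hP (ω t)
  split_ifs <;> first | linarith | tauto

theorem probT_eq_zero_of_forall_not {A : (Fin T → Fin d) → Prop} (h : ∀ ω, ¬ A ω) :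
    probT P T A = 0 :=
  Finset.sum_eq_zero fun ω _ => if_neg (h ω)

theorem natCast_mul_sum_mul_empDist (ω : Fin T → Fin d) (f : Fin d → ℝ) :
    (T : ℝ) * ∑ i, f i * empDist ω i = ∑ t, f (ω t) := by
  rcases Nat.eq_zero_or_pos T with rfl | hT
  · simp
  rw [← Finset.sum_fiberwise Finset.univ ω, Finset.mul_sum]
  refine Finset.sum_congr rfl fun i _ => ?_
  rw [Finset.sum_congr rfl fun t ht => congrArg f (Finset.mem_filter.mp ht).2, Finset.sum_const,
    nsmul_eq_mul, empDist]
  field_simp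

theorem probT_sum_ge_le_pow (hP : ∀ i, 0 ≤ P i) (h : Fin d → ℝ) {η : ℝ} (hη : 0 ≤ η) (s : ℝ) :
    probT P T (fun ω => T * s ≤ ∑ t, h (ω t)) ≤ (∑ i, P i * exp (η * (h i - s))) ^ T := by
  rw [Finset.sum_pow', Fintype.piFinset_univ]
  refine Finset.sum_le_sum fun ω _ => ?_
  rw [Finset.prod_mul_distrib, ← exp_sum, ← Finset.mul_sum, Finset.sum_sub_distrib]
  have hp : 0 ≤ ∏ t, P (ω t) := Finset.prod_nonneg fun t _ => hP (ω t)
  split_ifs with hE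
  · refine le_mul_of_one_le_right hp (one_le_exp (mul_nonneg hη ?_))
    simpa using hE
  · positivity

theorem exp_le_one_add_add_sq_mul {y : ℝ} (hy : |y| ≤ 1) :
    exp y ≤ 1 + y + y ^ 2 * (1 / 2 + |y|) := by
  have h := (abs_le.mp (Real.exp_bound hy (n := 3) (by norm_num))).2
  norm_num [Finset.sum_range_succ, Nat.factorial] at h
  have hcube : |y| ^ 3 = y ^ 2 * |y| := by rw [pow_succ, sq_abs]
  nlinarith [mul_nonneg (sq_nonneg y) (abs_nonneg y)]

theorem sum_mul_exp_le (hP0 : ∀ i, 0 ≤ P i) (hP1 : ∑ i, P i = 1) {h : Fin d → ℝ}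
    (hmean : ∑ i, P i * h i = 0) {u : ℝ} (hu : ∀ i, |h i| ≤ u) (hu1 : u ≤ 1) :
    ∑ i, P i * exp (h i) ≤ exp ((∑ i, P i * h i ^ 2) * (1 / 2 + u)) := by
  calc ∑ i, P i * exp (h i) ≤ ∑ i, P i * (1 + h i + h i ^ 2 * (1 / 2 + u)) := by
        gcongr with i
        · exact hP0 i
        calc exp (h i) ≤ 1 + h i + h i ^ 2 * (1 / 2 + |h i|) :=
              exp_le_one_add_add_sq_mul ((hu i).trans hu1)
          _ ≤ 1 + h i + h i ^ 2 * (1 / 2 + u) := by gcongr; exact hu i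
    _ = 1 + (∑ i, P i * h i ^ 2) * (1 / 2 + u) := by
        simp only [mul_add, mul_one, Finset.sum_add_distrib, hP1, hmean, ← mul_assoc,
          ← Finset.sum_mul]
        ring
    _ ≤ exp ((∑ i, P i * h i ^ 2) * (1 / 2 + u)) := by
        linarith [add_one_le_exp ((∑ i, P i * h i ^ 2) * (1 / 2 + u))]

end ProbT

section Deviation

variable {d : ℕ} {P : Fin d → ℝ} {h : Fin d → ℝ}

theorem probT_sum_ge_le_exp (hP0 : ∀ i, 0 ≤ P i) (hP1 : ∑ i, P i = 1)
    (hmean : ∑ i, P i * h i = 0) {M : ℝ} (hM : ∀ i, |h i| ≤ M) {η : ℝ} (hη : 0 ≤ η)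
    (hηM : η * M ≤ 1) (T : ℕ) (s : ℝ) :
    probT P T (fun ω => T * s ≤ ∑ t, h (ω t)) ≤
      exp (T * (η ^ 2 * (∑ i, P i * h i ^ 2) * (1 / 2 + η * M) - η * s)) := by
  have hmean' : ∑ i, P i * (η * h i) = 0 := by
    simp only [mul_left_comm _ η, ← Finset.mul_sum, hmean, mul_zero]
  have hbound : ∀ i, |η * h i| ≤ η * M := fun i => by
    rw [abs_mul, abs_of_nonneg hη]; exact mul_le_mul_of_nonneg_left (hM i) hη
  calc probT P T (fun ω => T * s ≤ ∑ t, h (ω t))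
      ≤ (∑ i, P i * exp (η * (h i - s))) ^ T := probT_sum_ge_le_pow hP0 h hη s
    _ = (exp (-(η * s)) * ∑ i, P i * exp (η * h i)) ^ T := by
        rw [Finset.mul_sum]
        congr 1
        refine Finset.sum_congr rfl fun i _ => ?_
        rw [mul_sub, sub_eq_add_neg, exp_add]
        ring
    _ ≤ (exp (-(η * s)) * exp ((∑ i, P i * (η * h i) ^ 2) * (1 / 2 + η * M))) ^ T := by
        gcongr
        · exact mul_nonneg (exp_nonneg _)
            (Finset.sum_nonneg fun i _ => mul_nonneg (hP0 i) (exp_nonneg _))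
        · exact sum_mul_exp_le hP0 hP1 hmean' hbound hηM
    _ = exp (T * (η ^ 2 * (∑ i, P i * h i ^ 2) * (1 / 2 + η * M) - η * s)) := by
        rw [← exp_add, ← exp_nat_mul]
        congr 1
        simp only [mul_pow, mul_left_comm _ (η ^ 2), ← Finset.mul_sum]
        ring

theorem probT_sum_ge_le_bernstein (hP0 : ∀ i, 0 ≤ P i) (hP1 : ∑ i, P i = 1)
    (hmean : ∑ i, P i * h i = 0) (hvar : 0 < ∑ i, P i * h i ^ 2) {M : ℝ}
    (hM : ∀ i, |h i| ≤ M) {s : ℝ} (hs : 0 ≤ s) (hsM : s * M ≤ ∑ i, P i * h i ^ 2) (T : ℕ) :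
    probT P T (fun ω => T * s ≤ ∑ t, h (ω t)) ≤
      exp (-(T * s ^ 2 / (2 * ∑ i, P i * h i ^ 2) *
        (1 - 2 * s * M / ∑ i, P i * h i ^ 2))) := by
  set σsq := ∑ i, P i * h i ^ 2
  have hη : 0 ≤ s / σsq := div_nonneg hs hvar.le
  have hηM : s / σsq * M ≤ 1 := by rw [div_mul_eq_mul_div, div_le_one hvar]; exact hsM
  refine (probT_sum_ge_le_exp hP0 hP1 hmean hM hη hηM T s).trans_eq ?_
  congr 1
  field_simp
  ring

theorem exists_probT_sum_ge_le_exp (hP0 : ∀ i, 0 ≤ P i) (hP1 : ∑ i, P i = 1)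
    (hmean : ∑ i, P i * h i = 0) {δ : ℝ} (hδ : 0 < δ) :
    ∃ c > 0, ∀ T : ℕ, probT P T (fun ω => T * δ ≤ ∑ t, h (ω t)) ≤ exp (-(c * T)) := by
  obtain ⟨M, hM⟩ := Finite.exists_le fun i => |h i|
  set σsq := ∑ i, P i * h i ^ 2
  have hlim₁ : Tendsto (fun η : ℝ => η * M) (𝓝 0) (𝓝 0) :=
    (continuous_mul_const M).tendsto' 0 0 (zero_mul M)
  have hlim₂ : Tendsto (fun η : ℝ => η * σsq * (1 / 2 + η * M)) (𝓝 0) (𝓝 0) :=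
    (by fun_prop : Continuous fun η : ℝ => η * σsq * (1 / 2 + η * M)).tendsto' 0 0 (by simp)
  -- the Chernoff exponent `η * (η * σsq * (1 / 2 + η * M) - δ)` is negative for small `η > 0`
  obtain ⟨η, ⟨hηM, hησ⟩, hη⟩ := (((hlim₁.eventually_le_const one_pos).and
    (hlim₂.eventually_le_const (half_pos hδ))).filter_mono nhdsWithin_le_nhds).and
    self_mem_nhdsWithin |>.exists (f := 𝓝[>] (0 : ℝ))
  refine ⟨η * δ / 2, by positivity, fun T => ?_⟩
  refine (probT_sum_ge_le_exp hP0 hP1 hmean hM hη.le hηM T δ).trans (exp_le_exp.mpr ?_)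
  have : η * (η * σsq * (1 / 2 + η * M)) ≤ η * (δ / 2) := mul_le_mul_of_nonneg_left hησ hη.le
  nlinarith [(Nat.cast_nonneg T : (0 : ℝ) ≤ T)]

theorem eventually_probT_sum_ge_le_exp (hP0 : ∀ i, 0 ≤ P i) (hP1 : ∑ i, P i = 1)
    (hmean : ∑ i, P i * h i = 0) (hvar : 0 < ∑ i, P i * h i ^ 2) {κ : ℝ} (hκ : κ < 1)
    {s : ℕ → ℝ} (hs0 : ∀ T, 0 ≤ s T) (hs : Tendsto s atTop (𝓝 0)) :
    ∀ᶠ T in atTop, probT P T (fun ω => T * s T ≤ ∑ t, h (ω t)) ≤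
      exp (-(κ * (T * s T ^ 2 / (2 * ∑ i, P i * h i ^ 2)))) := by
  obtain ⟨M, hM⟩ := Finite.exists_le fun i => |h i|
  set σsq := ∑ i, P i * h i ^ 2
  have hlim : Tendsto (fun T => 2 * s T * M / σsq) atTop (𝓝 0) := by
    simpa using ((hs.const_mul 2).mul_const M).div_const σsq
  filter_upwards [hlim.eventually_lt_const (sub_pos.mpr hκ),
    hlim.eventually_lt_const one_pos] with T hκT h1T
  have hsM : s T * M ≤ σsq := by
    rw [div_lt_one hvar] at h1T
    nlinarith
  refine (probT_sum_ge_le_bernstein hP0 hP1 hmean hvar hM (hs0 T) hsM T).trans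
    (exp_le_exp.mpr (neg_le_neg ?_))
  rw [mul_comm]
  exact mul_le_mul_of_nonneg_left (by linarith) (by positivity)

theorem sum_mul_sum_sub_eq_zero (hP1 : ∑ i, P i = 1)
    (f : Fin d → ℝ) : ∑ i, P i * (∑ j, f j * P j - f i) = 0 := by
  rw [Finset.sum_congr rfl fun i _ => mul_sub (P i) _ _, Finset.sum_sub_distrib, ← Finset.sum_mul,
    hP1, one_mul]
  exact sub_eq_zero.mpr (Finset.sum_congr rfl fun i _ => mul_comm _ _)

theorem exists_probT_abs_sub_ge_le (hP0 : ∀ i, 0 ≤ P i)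
    (hP1 : ∑ i, P i = 1) (f : Fin d → ℝ) {δ : ℝ} (hδ : 0 < δ) :
    ∃ c > 0, ∀ T : ℕ, probT P T (fun ω => δ ≤ |∑ i, f i * empDist ω i - ∑ i, f i * P i|) ≤
      2 * exp (-(c * T)) := by
  have hmean := sum_mul_sum_sub_eq_zero hP1 f
  have hmean' : ∑ i, P i * (f i - ∑ j, f j * P j) = 0 := by
    rw [← neg_eq_zero, ← hmean, ← Finset.sum_neg_distrib]
    exact Finset.sum_congr rfl fun i _ => by ring
  obtain ⟨c₁, hc₁, hup⟩ := exists_probT_sum_ge_le_exp hP0 hP1 hmean' hδ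
  obtain ⟨c₂, hc₂, hdown⟩ := exists_probT_sum_ge_le_exp hP0 hP1 hmean hδ
  refine ⟨min c₁ c₂, lt_min hc₁ hc₂, fun T => ?_⟩
  have hincl : ∀ ω : Fin T → Fin d, δ ≤ |∑ i, f i * empDist ω i - ∑ i, f i * P i| →
      T * δ ≤ ∑ t, (f (ω t) - ∑ j, f j * P j) ∨
        T * δ ≤ ∑ t, (∑ j, f j * P j - f (ω t)) := fun ω hω => by
    have hsum : ∑ t, (f (ω t) - ∑ j, f j * P j) =
        T * (∑ i, f i * empDist ω i - ∑ i, f i * P i) := by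
      rw [mul_sub, natCast_mul_sum_mul_empDist, Finset.sum_sub_distrib]
      simp
    have hT : T * δ ≤ |∑ t, (f (ω t) - ∑ j, f j * P j)| := by
      rw [hsum, abs_mul, Nat.abs_cast]
      exact mul_le_mul_of_nonneg_left hω (Nat.cast_nonneg T)
    refine (le_abs.mp hT).imp id fun h => ?_
    rwa [← Finset.sum_neg_distrib, Finset.sum_congr rfl fun t _ => neg_sub _ _] at h
  have hrate : ∀ c ≥ min c₁ c₂, exp (-(c * T)) ≤ exp (-(min c₁ c₂ * T)) := fun c hc => by
    gcongr
  calc _ ≤ _ := probT_mono hP0 hincl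
    _ ≤ _ := probT_or_le hP0 _ _
    _ ≤ exp (-(c₁ * T)) + exp (-(c₂ * T)) := add_le_add (hup T) (hdown T)
    _ ≤ 2 * exp (-(min c₁ c₂ * T)) := by
        linarith [hrate c₁ (min_le_left _ _), hrate c₂ (min_le_right _ _)]

end Deviation

theorem eventually_mul_exp_neg_le {a : ℕ → ℝ}
    (ha : Tendsto (fun T : ℕ => a T / T) atTop (𝓝 0)) {K c : ℝ} (hK : 0 < K) (hc : 0 < c)
    (θ : ℝ) : ∀ᶠ T : ℕ in atTop, K * exp (-(c * T)) ≤ exp (-(θ * a T)) := by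
  have hlim : Tendsto (fun T : ℕ => θ * (a T / T) + log K * (1 / T)) atTop (𝓝 0) := by
    simpa using (ha.const_mul θ).add (tendsto_one_div_atTop_nhds_zero_nat.const_mul (log K))
  filter_upwards [hlim.eventually_lt_const hc, eventually_gt_atTop 0] with T hT hT0
  have hT0' : (0 : ℝ) < T := Nat.cast_pos.mpr hT0
  have hscale : (θ * (a T / T) + log K * (1 / T)) * T = θ * a T + log K := by field_simp
  rw [← exp_log hK, ← exp_add, exp_le_exp]
  nlinarith [mul_lt_mul_of_pos_right hT hT0']

section Loss

variable {X : Type*} {d : ℕ} (ℓ : X → Fin d → ℝ) (x : X) {P : Fin d → ℝ}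

theorem varLoss_eq_sum_mul_sq (hP1 : ∑ i, P i = 1) :
    varLoss ℓ x P = ∑ i, P i * (cost ℓ x P - ℓ x i) ^ 2 := by
  have h : ∀ i, P i * (cost ℓ x P - ℓ x i) ^ 2 =
      cost ℓ x P ^ 2 * P i - 2 * cost ℓ x P * (ℓ x i * P i) + ℓ x i ^ 2 * P i := fun i => by ring
  rw [Finset.sum_congr rfl fun i _ => h i, Finset.sum_add_distrib, Finset.sum_sub_distrib,
    ← Finset.mul_sum, ← Finset.mul_sum, hP1, varLoss]
  simp only [cost]
  ring

theorem probT_cost_gt_cV_eq_zero (hP : P ∈ simplexInt d) (hvar : varLoss ℓ x P = 0)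
    (a : ℕ → ℝ) {T : ℕ} (hT : 0 < T) :
    probT P T (fun ω => cost ℓ x P > cV a ℓ x (empDist ω) T) = 0 := by
  obtain ⟨hPpos, hP1⟩ := hP
  have hconst : ∀ i, ℓ x i = cost ℓ x P := fun i => by
    rw [varLoss_eq_sum_mul_sq ℓ x hP1, Finset.sum_eq_zero_iff_of_nonneg
      fun i _ => mul_nonneg (hPpos i).le (sq_nonneg _)] at hvar
    have := hvar i (Finset.mem_univ i)
    rw [mul_eq_zero, or_iff_right (hPpos i).ne', sq_eq_zero_iff, sub_eq_zero] at this
    exact this.symm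
  refine probT_eq_zero_of_forall_not fun ω => not_lt.mpr ?_
  have hcost : cost ℓ x (empDist ω) = cost ℓ x P := by
    have h := natCast_mul_sum_mul_empDist ω (ℓ x)
    rw [Finset.sum_congr rfl fun t _ => hconst (ω t), Finset.sum_const, Finset.card_univ,
      Fintype.card_fin, nsmul_eq_mul] at h
    exact mul_left_cancel₀ (Nat.cast_ne_zero.mpr hT.ne') h
  rw [cV, hcost]
  exact le_add_of_nonneg_right (sqrt_nonneg _)

theorem exists_probT_varLoss_empDist_lt_le (hP0 : ∀ i, 0 ≤ P i) (hP1 : ∑ i, P i = 1) {v : ℝ}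
    (hv : v < varLoss ℓ x P) :
    ∃ c > 0, ∀ T : ℕ, probT P T (fun ω => varLoss ℓ x (empDist ω) < v) ≤ 4 * exp (-(c * T)) := by
  have hcont : ∀ᶠ q in 𝓝 (cost ℓ x P, ∑ i, ℓ x i ^ 2 * P i), v < q.2 - q.1 ^ 2 :=
    (by fun_prop : Continuous fun q : ℝ × ℝ => q.2 - q.1 ^ 2).continuousAt.eventually
      (lt_mem_nhds hv)
  obtain ⟨δ, hδ, hnear⟩ := Metric.eventually_nhds_iff.mp hcont
  obtain ⟨c₁, hc₁, hmean⟩ := exists_probT_abs_sub_ge_le hP0 hP1 (ℓ x) hδ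
  obtain ⟨c₂, hc₂, hsq⟩ := exists_probT_abs_sub_ge_le hP0 hP1 (fun i => ℓ x i ^ 2) hδ
  refine ⟨min c₁ c₂, lt_min hc₁ hc₂, fun T => ?_⟩
  have hincl : ∀ ω : Fin T → Fin d, varLoss ℓ x (empDist ω) < v →
      δ ≤ |∑ i, ℓ x i * empDist ω i - ∑ i, ℓ x i * P i| ∨
        δ ≤ |∑ i, ℓ x i ^ 2 * empDist ω i - ∑ i, ℓ x i ^ 2 * P i| := fun ω hω => by
    by_contra! h
    refine hω.not_gt (hnear (y := (cost ℓ x (empDist ω), ∑ i, ℓ x i ^ 2 * empDist ω i)) ?_)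
    rw [Prod.dist_eq, max_lt_iff]
    exact h
  have hrate : ∀ c ≥ min c₁ c₂, exp (-(c * T)) ≤ exp (-(min c₁ c₂ * T)) := fun c hc => by
    gcongr
  calc _ ≤ _ := probT_mono hP0 hincl
    _ ≤ _ := probT_or_le hP0 _ _
    _ ≤ 2 * exp (-(c₁ * T)) + 2 * exp (-(c₂ * T)) := add_le_add (hmean T) (hsq T)
    _ ≤ 4 * exp (-(min c₁ c₂ * T)) := by
        linarith [hrate c₁ (min_le_left _ _), hrate c₂ (min_le_right _ _)]

theorem cost_gt_cV_imp {a : ℕ → ℝ} {T : ℕ} (ha : 0 ≤ a T) (v : ℝ) {ω : Fin T → Fin d}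
    (hω : cost ℓ x P > cV a ℓ x (empDist ω) T) :
    varLoss ℓ x (empDist ω) < v ∨
      T * √(2 * a T / T * v) ≤ ∑ t, (cost ℓ x P - ℓ x (ω t)) := by
  refine or_iff_not_imp_left.mpr fun hv => ?_
  have hsqrt : √(2 * a T / T * v) ≤ √(2 * a T / T * varLoss ℓ x (empDist ω)) := by
    gcongr
    exact not_lt.mp hv
  have hsum : ∑ t, (cost ℓ x P - ℓ x (ω t)) = T * (cost ℓ x P - cost ℓ x (empDist ω)) := by
    rw [Finset.sum_sub_distrib, ← natCast_mul_sum_mul_empDist ω (ℓ x)]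
    simp [cost, mul_sub]
  rw [hsum]
  exact mul_le_mul_of_nonneg_left (by rw [cV] at hω; linarith) (Nat.cast_nonneg T)

end Loss

theorem eventually_probT_cost_gt_cV_le {X : Type*} {d : ℕ} (ℓ : X → Fin d → ℝ) (x : X)
    {P : Fin d → ℝ} (hP : P ∈ simplexInt d) (hvar : 0 < varLoss ℓ x P) {a : ℕ → ℝ}
    (ha_top : Tendsto a atTop atTop) (ha_sub : Tendsto (fun T : ℕ => a T / T) atTop (𝓝 0))
    {θ : ℝ} (hθ : θ < 1) :
    ∀ᶠ T in atTop, probT P T (fun ω => cost ℓ x P > cV a ℓ x (empDist ω) T) ≤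
      exp (-(θ * a T)) := by
  obtain ⟨hPpos, hP1⟩ := hP
  have hP0 : ∀ i, 0 ≤ P i := fun i => (hPpos i).le
  obtain ⟨θ', hθθ', hθ'1⟩ := exists_between (max_lt hθ one_pos)
  have hθ'0 : 0 < θ' := (le_max_right θ 0).trans_lt hθθ'
  -- `ρ = √θ'` is spent twice: on the variance of `P̂_T` and on Bernstein's correction term
  set ρ := √θ'
  have hρ0 : 0 < ρ := sqrt_pos.mpr hθ'0
  have hρ1 : ρ < 1 := by simpa using sqrt_lt_sqrt hθ'0.le hθ'1
  have hρρ : ρ * ρ = θ' := mul_self_sqrt hθ'0.le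
  obtain ⟨c, hc, hbad⟩ :=
    exists_probT_varLoss_empDist_lt_le ℓ x hP0 hP1 (mul_lt_of_lt_one_left hvar hρ1)
  set s : ℕ → ℝ := fun T => √(2 * a T / T * (ρ * varLoss ℓ x P))
  have hs : Tendsto s atTop (𝓝 0) := by
    simpa [s, mul_div_assoc] using
      (((ha_sub.const_mul 2).mul_const (ρ * varLoss ℓ x P)).sqrt)
  have hmean : ∑ i, P i * (cost ℓ x P - ℓ x i) = 0 := sum_mul_sum_sub_eq_zero hP1 (ℓ x)
  have hmain := eventually_probT_sum_ge_le_exp hP0 hP1 hmean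
    (varLoss_eq_sum_mul_sq ℓ x hP1 ▸ hvar) hρ1 (fun T => sqrt_nonneg _) hs
  rw [← varLoss_eq_sum_mul_sq ℓ x hP1] at hmain
  filter_upwards [hmain, eventually_mul_exp_neg_le ha_sub (by norm_num : (0 : ℝ) < 8) hc θ,
    ha_top.eventually_ge_atTop (log 2 / (θ' - θ)), ha_top.eventually_ge_atTop 0,
    eventually_gt_atTop 0] with T hmainT hbadT ha2 ha0 hT
  have hexponent : ρ * (T * s T ^ 2 / (2 * varLoss ℓ x P)) = θ' * a T := by
    rw [sq_sqrt (by positivity), ← hρρ]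
    field_simp
  have hhalf : exp (-(θ' * a T)) ≤ exp (-(θ * a T)) / 2 := by
    rw [le_div_iff₀ two_pos, ← exp_log two_pos, ← exp_add, exp_le_exp]
    have := (div_le_iff₀ (sub_pos.mpr ((le_max_left θ 0).trans_lt hθθ'))).mp ha2
    linarith
  calc _ ≤ _ := probT_mono hP0 fun ω => cost_gt_cV_imp ℓ x ha0 (ρ * varLoss ℓ x P)
    _ ≤ _ := probT_or_le hP0 _ _
    _ ≤ 4 * exp (-(c * T)) + exp (-(θ' * a T)) := add_le_add (hbad T) (hexponent ▸ hmainT)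
    _ ≤ exp (-(θ * a T)) := by linarith

theorem stmt_6_general {X : Type*} {d : ℕ}
    (ℓ : X → Fin d → ℝ)
    (a : ℕ → ℝ)
    (ha_top : Tendsto a atTop atTop)
    (ha_sub : Tendsto (fun T : ℕ => a T / (T : ℝ)) atTop (nhds 0)) :
    OOSGuarantee ℓ a (cV a ℓ) := by
  intro x P hP ε hε
  have hvar : 0 ≤ varLoss ℓ x P := by
    rw [varLoss_eq_sum_mul_sq ℓ x hP.2]
    exact Finset.sum_nonneg fun i _ => mul_nonneg (hP.1 i).le (sq_nonneg _)
  rcases hvar.eq_or_lt with hvar | hvar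
  · filter_upwards [eventually_gt_atTop 0] with T hT
    rw [probT_cost_gt_cV_eq_zero ℓ x hP hvar.symm a hT]
    positivity
  · filter_upwards [eventually_probT_cost_gt_cV_le ℓ x hP hvar ha_top ha_sub
      (θ := 1 - ε) (by linarith)] with T hT
    convert hT using 2
    ring

/-- In the subexponential regime (`a_T → ∞`, `a_T/T → 0`), the SVP predictor
`ĉ_V` satisfies the out-of-sample guarantee. -/
theorem stmt_6 {X : Type*} [MetricSpace X] [CompactSpace X] {d : ℕ}
    (ℓ : X → Fin d → ℝ) (hℓ : ∀ i, Continuous fun x => ℓ x i)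
    (a : ℕ → ℝ) (ha_pos : ∀ T, 0 < a T)
    (ha_top : Tendsto a atTop atTop)
    (ha_sub : Tendsto (fun T : ℕ => a T / (T : ℝ)) atTop (nhds 0)) :
    OOSGuarantee ℓ a (cV a ℓ) :=
  stmt_6_general ℓ a ha_top ha_sub

end DDO
end
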